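/- If a graph G is 5-γ_tR-edge-critical, then either G is 3-γ_t-edge-critical, or G is the disjoint union of K_2 and K_n for some n ≥ 3, in which case G is 4-γ_t-edge-supercritical. -/
import Mathlib


/-- A total Roman dominating function: values in {0,1,2}, every vertex with value 0
has a neighbour with value 2, and vertices with positive value are not isolated in
the induced subgraph of positive-value vertices. -/
def TRDF {V : Type*} (G : SimpleGraph V) (f : V → ℕ) : Prop :=
  (∀ v, f v ≤ 2) ∧
  (∀ v, f v = 0 → ∃ u, G.Adj v u ∧ f u = 2) ∧
  (∀ v, 0 < f v → ∃ u, G.Adj v u ∧ 0 < f u)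

/-- The total Roman domination number. -/
noncomputable def trdn {V : Type*} [Fintype V] (G : SimpleGraph V) : ℕ :=
  sInf {w | ∃ f : V → ℕ, TRDF G f ∧ w = ∑ v, f v}

/-- The graph `G + uv`. -/
def addEdge {V : Type*} (G : SimpleGraph V) (u v : V) : SimpleGraph V :=
  G ⊔ SimpleGraph.fromEdgeSet {s(u, v)}

/-- `G` has no isolated vertices. -/
def NoIsolated {V : Type*} (G : SimpleGraph V) : Prop := ∀ v, ∃ u, G.Adj v u

/-- The domination number. -/
noncomputable def domn {V : Type*} [Fintype V] (G : SimpleGraph V) : ℕ :=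
  sInf {k | ∃ S : Finset V, (∀ v, v ∉ S → ∃ u ∈ S, G.Adj v u) ∧ S.card = k}

/-- The total domination number. -/
noncomputable def tdomn {V : Type*} [Fintype V] (G : SimpleGraph V) : ℕ :=
  sInf {k | ∃ S : Finset V, (∀ v, ∃ u ∈ S, G.Adj v u) ∧ S.card = k}

set_option linter.unusedSectionVars false

section TRDAux

open Finset

variable {V : Type*} [Fintype V] {G : SimpleGraph V}

lemma addEdge_adj {u v a b : V} :
    (addEdge G u v).Adj a b ↔ G.Adj a b ∨ ((a = u ∧ b = v ∨ a = v ∧ b = u) ∧ a ≠ b) := by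
  show (G ⊔ SimpleGraph.fromEdgeSet {s(u, v)}).Adj a b ↔ _
  rw [SimpleGraph.sup_adj, SimpleGraph.fromEdgeSet_adj]
  simp [Sym2.eq_iff]

lemma noIso_of_trdf {f : V → ℕ} (hf : TRDF G f) : NoIsolated G := by
  intro v
  rcases Nat.eq_zero_or_pos (f v) with h | h
  · obtain ⟨u, hu, _⟩ := hf.2.1 v h; exact ⟨u, hu⟩
  · obtain ⟨u, hu, _⟩ := hf.2.2 v h; exact ⟨u, hu⟩

lemma noIsolated_addEdge {u v : V} (h : NoIsolated G) : NoIsolated (addEdge G u v) := by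
  intro w; obtain ⟨x, hx⟩ := h w; exact ⟨x, addEdge_adj.mpr (Or.inl hx)⟩

lemma trdn_nonempty (h : NoIsolated G) :
    {w | ∃ f : V → ℕ, TRDF G f ∧ w = ∑ v, f v}.Nonempty := by
  refine ⟨_, fun _ => 1, ⟨fun v => by norm_num, fun v h0 => by simp at h0, fun v _ => ?_⟩, rfl⟩
  obtain ⟨u, hu⟩ := h v
  exact ⟨u, hu, by norm_num⟩

lemma exists_trdf (h : NoIsolated G) : ∃ f, TRDF G f ∧ ∑ v, f v = trdn G := by
  obtain ⟨f, hf, hw⟩ := Nat.sInf_mem (trdn_nonempty h)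
  exact ⟨f, hf, hw.symm⟩

lemma trdn_le {f : V → ℕ} (hf : TRDF G f) : trdn G ≤ ∑ v, f v :=
  Nat.sInf_le ⟨f, hf, rfl⟩

lemma trdn_le_card (h : NoIsolated G) : trdn G ≤ Fintype.card V := by
  have h1 := trdn_le (G := G) (f := fun _ => 1) ⟨fun v => by norm_num,
    fun v h0 => by simp at h0, fun v _ => by
      obtain ⟨u, hu⟩ := h v; exact ⟨u, hu, by norm_num⟩⟩
  simpa using h1

lemma trdf_of_ne_zero (h : trdn G ≠ 0) :
    ∃ f : V → ℕ, TRDF G f ∧ ∑ v, f v = trdn G := by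
  have hne : {w | ∃ f : V → ℕ, TRDF G f ∧ w = ∑ v, f v}.Nonempty := by
    by_contra hc
    rw [Set.not_nonempty_iff_eq_empty] at hc
    apply h
    unfold trdn
    rw [hc, Nat.sInf_empty]
  obtain ⟨f, hf, hw⟩ := Nat.sInf_mem hne
  exact ⟨f, hf, hw.symm⟩

lemma sum_two {g : V → ℕ} {a b : V} (hab : a ≠ b) : g a + g b ≤ ∑ v, g v := by
  classical
  have h : ({a, b} : Finset V).sum g ≤ ∑ v, g v :=
    Finset.sum_le_sum_of_subset (Finset.subset_univ _)
  rwa [Finset.sum_insert (by simp [hab]), Finset.sum_singleton] at h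

lemma sum_three {g : V → ℕ} {a b c : V} (hab : a ≠ b) (hac : a ≠ c) (hbc : b ≠ c) :
    g a + g b + g c ≤ ∑ v, g v := by
  classical
  have h : ({a, b, c} : Finset V).sum g ≤ ∑ v, g v :=
    Finset.sum_le_sum_of_subset (Finset.subset_univ _)
  rwa [Finset.sum_insert (by simp [hab, hac]), Finset.sum_insert (by simp [hbc]),
    Finset.sum_singleton, ← add_assoc] at h

lemma sum_four {g : V → ℕ} {a b c d : V} (hab : a ≠ b) (hac : a ≠ c) (had : a ≠ d)
    (hbc : b ≠ c) (hbd : b ≠ d) (hcd : c ≠ d) :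
    g a + g b + g c + g d ≤ ∑ v, g v := by
  classical
  have h : ({a, b, c, d} : Finset V).sum g ≤ ∑ v, g v :=
    Finset.sum_le_sum_of_subset (Finset.subset_univ _)
  rwa [Finset.sum_insert (by simp [hab, hac, had]), Finset.sum_insert (by simp [hbc, hbd]),
    Finset.sum_insert (by simp [hcd]), Finset.sum_singleton, ← add_assoc, ← add_assoc] at h

lemma pair_lemma (hcard : 5 ≤ Fintype.card V) {g : V → ℕ} (hg : TRDF G g)
    (hw : ∑ v, g v ≤ 4) :
    ∃ x y, G.Adj x y ∧ ∀ w, G.Adj w x ∨ G.Adj w y := by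
  obtain ⟨hle2, h0, hpos⟩ := hg
  have hz : ∃ z, g z = 0 := by
    by_contra hc
    push_neg at hc
    have h1 : ∑ _v : V, 1 ≤ ∑ v, g v :=
      Finset.sum_le_sum fun v _ => Nat.one_le_iff_ne_zero.2 (hc v)
    simp only [Finset.sum_const, smul_eq_mul, mul_one, Finset.card_univ] at h1
    omega
  obtain ⟨z, hz0⟩ := hz
  obtain ⟨x, hzx, hx2⟩ := h0 z hz0
  obtain ⟨y, hxy, hy⟩ := hpos x (by omega)
  refine ⟨x, y, hxy, fun w => ?_⟩
  by_cases hw0 : g w = 0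
  · obtain ⟨x', hwx', hx'2⟩ := h0 w hw0
    by_cases hxx' : x' = x
    · exact Or.inl (hxx' ▸ hwx')
    · have hyx' : y = x' := by
        by_contra hyne
        have hxy' : x ≠ y := hxy.ne
        have := sum_three (g := g) (a := x) (b := x') (c := y) (fun h => hxx' h.symm)
          hxy' (fun h => hyne h.symm)
        omega
      exact Or.inr (hyx' ▸ hwx')
  · obtain ⟨p, hwp, hp⟩ := hpos w (Nat.pos_of_ne_zero hw0)
    by_cases hpx : p = x
    · exact Or.inl (hpx ▸ hwp)
    by_cases hpy : p = y
    · exact Or.inr (hpy ▸ hwp)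
    by_cases hwx : w = x
    · exact Or.inr (by rw [hwx]; exact hxy)
    by_cases hwy : w = y
    · exact Or.inl (by rw [hwy]; exact hxy.symm)
    · exfalso
      have hxyne : x ≠ y := hxy.ne
      have hwpne : w ≠ p := hwp.ne
      have := sum_four (g := g) (a := x) (b := y) (c := p) (d := w) hxyne
        (fun h => hpx h.symm) (fun h => hwx h.symm)
        (fun h => hpy h.symm) (fun h => hwy h.symm) (fun h => hwpne h.symm)
      omega

lemma tds_card_two (hnv : Nonempty V) {H : SimpleGraph V} {S : Finset V}
    (h : ∀ w, ∃ s ∈ S, H.Adj w s) : 2 ≤ S.card := by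
  obtain ⟨v⟩ := hnv
  obtain ⟨s, hs, _⟩ := h v
  obtain ⟨t, ht, hadj⟩ := h s
  exact Finset.one_lt_card.mpr ⟨s, hs, t, ht, hadj.ne⟩

lemma tds_card_three (h5 : trdn G = 5) (hnv : Nonempty V) {S : Finset V}
    (h : ∀ w, ∃ s ∈ S, G.Adj w s) : 3 ≤ S.card := by
  classical
  by_contra hc
  push_neg at hc
  have htrdf : TRDF G (fun w => if w ∈ S then 2 else 0) := by
    refine ⟨fun v => by dsimp only; split <;> omega, fun v hv => ?_, fun v hv => ?_⟩
    · obtain ⟨s, hs, hadj⟩ := h v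
      exact ⟨s, hadj, by simp [hs]⟩
    · obtain ⟨s, hs, hadj⟩ := h v
      exact ⟨s, hadj, by simp [hs]⟩
  have hle := trdn_le htrdf
  have hsum : ∑ v, (if v ∈ S then 2 else 0) = 2 * S.card := by
    rw [Finset.sum_ite_mem, Finset.univ_inter, Finset.sum_const, smul_eq_mul, mul_comm]
  rw [hsum] at hle
  omega

lemma helper3 (hiso : NoIsolated G)
    (hT : ∀ S : Finset V, (∀ w, ∃ s ∈ S, G.Adj w s) → 4 ≤ S.card)
    {u v y : V} (hy : y ≠ u) (hy' : y ≠ v)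
    (hadj : ∀ w, w ≠ v → G.Adj w u ∨ G.Adj w y) : False := by
  classical
  by_cases hv : G.Adj v u ∨ G.Adj v y
  · have h := hT {u, y} (fun w => ?_)
    · have hc : ({u, y} : Finset V).card ≤ 2 :=
        (Finset.card_insert_le _ _).trans (by simp)
      omega
    · by_cases hwv : w = v
      · subst hwv
        rcases hv with h | h
        exacts [⟨u, by simp, h⟩, ⟨y, by simp, h⟩]
      · rcases hadj w hwv with h | h
        exacts [⟨u, by simp, h⟩, ⟨y, by simp, h⟩]
  · push_neg at hv
    obtain ⟨t, ht⟩ := hiso v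
    have htu : t ≠ u := fun h => hv.1 (h ▸ ht)
    have hty : t ≠ y := fun h => hv.2 (h ▸ ht)
    have h := hT {u, y, t} (fun w => ?_)
    · have h1 := Finset.card_insert_le u ({y, t} : Finset V)
      have h2 := Finset.card_insert_le y ({t} : Finset V)
      simp only [Finset.card_singleton] at h2
      omega
    · by_cases hwv : w = v
      · subst hwv; exact ⟨t, by simp, ht⟩
      · rcases hadj w hwv with h | h
        exacts [⟨u, by simp, h⟩, ⟨y, by simp, h⟩]

lemma lemA (hiso : NoIsolated G)
    (hT : ∀ S : Finset V, (∀ w, ∃ s ∈ S, G.Adj w s) → 4 ≤ S.card)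
    {u v x y : V} (hne : u ≠ v) (hnadj : ¬G.Adj u v)
    (hxy : (addEdge G u v).Adj x y)
    (hdom : ∀ w, (addEdge G u v).Adj w x ∨ (addEdge G u v).Adj w y) :
    ∀ w, w ≠ u → w ≠ v → G.Adj w u ∨ G.Adj w v := by
  classical
  have hconv : ∀ a b : V, a ≠ u → a ≠ v → (addEdge G u v).Adj a b → G.Adj a b := by
    intro a b h1 h2 h
    rcases addEdge_adj.mp h with h | ⟨(⟨ha, _⟩ | ⟨ha, _⟩), _⟩
    · exact h
    · exact absurd ha h1
    · exact absurd ha h2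
  have hconvu : ∀ w : V, w ≠ v → (addEdge G u v).Adj w u → G.Adj w u := by
    intro w hwv h
    rcases addEdge_adj.mp h with h | ⟨(⟨h1, h2⟩ | ⟨h1, h2⟩), _⟩
    · exact h
    · exact absurd h2 hne
    · exact absurd h1 hwv
  have hconvv : ∀ w : V, w ≠ u → (addEdge G u v).Adj w v → G.Adj w v := by
    intro w hwu h
    rcases addEdge_adj.mp h with h | ⟨(⟨h1, h2⟩ | ⟨h1, h2⟩), _⟩
    · exact h
    · exact absurd h1 hwu
    · exact absurd h2.symm hne
  have hxyne : x ≠ y := hxy.ne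
  by_cases hxu : x = u
  · by_cases hyv : y = v
    · intro w hwu hwv
      rcases hdom w with h | h
      · rw [hxu] at h; exact Or.inl (hconvu w hwv h)
      · rw [hyv] at h; exact Or.inr (hconvv w hwu h)
    · exfalso
      have hyu : y ≠ u := fun h => hxyne (hxu.trans h.symm)
      refine helper3 hiso hT hyu hyv (fun w hwv => ?_)
      rcases hdom w with h | h
      · rw [hxu] at h; exact Or.inl (hconvu w hwv h)
      · exact Or.inr ((hconv y w hyu hyv h.symm).symm)
  · by_cases hxv : x = v
    · by_cases hyu : y = u
      · intro w hwu hwv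
        rcases hdom w with h | h
        · rw [hxv] at h; exact Or.inr (hconvv w hwu h)
        · rw [hyu] at h; exact Or.inl (hconvu w hwv h)
      · exfalso
        have hyv : y ≠ v := fun h => hxyne (hxv.trans h.symm)
        refine helper3 (u := v) (v := u) hiso hT hyv hyu (fun w hwu => ?_)
        rcases hdom w with h | h
        · rw [hxv] at h; exact Or.inl (hconvv w hwu h)
        · exact Or.inr ((hconv y w hyu hyv h.symm).symm)
    · by_cases hyu : y = u
      · exfalso
        refine helper3 hiso hT hxu hxv (fun w hwv => ?_)
        rcases hdom w with h | h
        · exact Or.inr ((hconv x w hxu hxv h.symm).symm)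
        · rw [hyu] at h; exact Or.inl (hconvu w hwv h)
      · by_cases hyv : y = v
        · exfalso
          refine helper3 (u := v) (v := u) hiso hT hxv hxu (fun w hwu => ?_)
          rcases hdom w with h | h
          · exact Or.inr ((hconv x w hxu hxv h.symm).symm)
          · rw [hyv] at h; exact Or.inl (hconvv w hwu h)
        · exfalso
          have h := hT {x, y} (fun w => ?_)
          · have hc : ({x, y} : Finset V).card ≤ 2 :=
              (Finset.card_insert_le _ _).trans (by simp)
            omega
          · rcases hdom w with h | h
            · exact ⟨x, by simp, (hconv x w hxu hxv h.symm).symm⟩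
            · exact ⟨y, by simp, (hconv y w hyu hyv h.symm).symm⟩

lemma structure_lemma (hiso : NoIsolated G) (h5 : trdn G = 5)
    (hpair : ∀ u v : V, u ≠ v → ¬G.Adj u v →
      ∃ x y, (addEdge G u v).Adj x y ∧
        ∀ w, (addEdge G u v).Adj w x ∨ (addEdge G u v).Adj w y)
    (hT : ∀ S : Finset V, (∀ w, ∃ s ∈ S, G.Adj w s) → 4 ≤ S.card)
    {u v : V} (huv : u ≠ v) (hnadj : ¬G.Adj u v) :
    ∃ a b : V, a ≠ b ∧ ∀ x y, G.Adj x y ↔ x ≠ y ∧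
      ((x ∈ ({a, b} : Set V) ∧ y ∈ ({a, b} : Set V)) ∨
       (x ∉ ({a, b} : Set V) ∧ y ∉ ({a, b} : Set V))) := by
  classical
  have hA : ∀ a b : V, a ≠ b → ¬G.Adj a b → ∀ w, w ≠ a → w ≠ b →
      G.Adj w a ∨ G.Adj w b := by
    intro a b h1 h2 w hw1 hw2
    obtain ⟨x, y, hxy, hdom⟩ := hpair a b h1 h2
    exact lemA hiso hT h1 h2 hxy hdom w hw1 hw2
  have hB : ∀ a b c : V, a ≠ b → ¬G.Adj a b → ¬(G.Adj a c ∧ G.Adj b c) := by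
    rintro a b c h1 h2 ⟨h3, h4⟩
    have htds : ∀ w, ∃ s ∈ ({a, b, c} : Finset V), G.Adj w s := by
      intro w
      by_cases hwa : w = a
      · exact ⟨c, by simp, hwa ▸ h3⟩
      by_cases hwb : w = b
      · exact ⟨c, by simp, hwb ▸ h4⟩
      rcases hA a b h1 h2 w hwa hwb with h | h
      · exact ⟨a, by simp, h⟩
      · exact ⟨b, by simp, h⟩
    have h4' := hT _ htds
    have c1 := Finset.card_insert_le a ({b, c} : Finset V)
    have c2 := Finset.card_insert_le b ({c} : Finset V)
    simp only [Finset.card_singleton] at c2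
    omega
  -- the two sides
  have htot : ∀ w : V, (w = u ∨ G.Adj u w) ∨ (w = v ∨ G.Adj v w) := by
    intro w
    by_cases hwu : w = u
    · exact Or.inl (Or.inl hwu)
    by_cases hwv : w = v
    · exact Or.inr (Or.inl hwv)
    rcases hA u v huv hnadj w hwu hwv with h | h
    · exact Or.inl (Or.inr h.symm)
    · exact Or.inr (Or.inr h.symm)
  have hdisj : ∀ w : V, (w = u ∨ G.Adj u w) → (w = v ∨ G.Adj v w) → False := by
    intro w hw1 hw2
    rcases hw1 with h1 | h1 <;> rcases hw2 with h2 | h2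
    · exact huv (h1.symm.trans h2)
    · rw [h1] at h2; exact hnadj h2.symm
    · rw [h2] at h1; exact hnadj h1
    · exact hB u v w huv hnadj ⟨h1, h2⟩
  have hcross : ∀ s t : V, (s = u ∨ G.Adj u s) → (t = v ∨ G.Adj v t) →
      ¬G.Adj s t := by
    intro s t hs' ht' hadj
    rcases hs' with hs | hs <;> rcases ht' with ht | ht
    · rw [hs, ht] at hadj; exact hnadj hadj
    · rw [hs] at hadj; exact hB u v t huv hnadj ⟨hadj, ht⟩
    · rw [ht] at hadj; exact hB u v s huv hnadj ⟨hs, hadj.symm⟩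
    · have hsv : s ≠ v := fun h => hnadj (h ▸ hs)
      have hsnadj : ¬G.Adj s v := fun h => hB u v s huv hnadj ⟨hs, h.symm⟩
      exact hB s v t hsv hsnadj ⟨hadj, ht⟩
  have hPcomp : ∀ s t : V, (s = u ∨ G.Adj u s) → (t = u ∨ G.Adj u t) → s ≠ t →
      G.Adj s t := by
    intro s t hs ht hst
    by_contra hn
    have hvP : ∀ z, (z = u ∨ G.Adj u z) → v ≠ z := by
      intro z hz h
      exact hdisj z hz (Or.inl h.symm)
    rcases hA s t hst hn v (hvP s hs) (hvP t ht) with h | h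
    · exact hcross s v hs (Or.inl rfl) h.symm
    · exact hcross t v ht (Or.inl rfl) h.symm
  have hQcomp : ∀ s t : V, (s = v ∨ G.Adj v s) → (t = v ∨ G.Adj v t) → s ≠ t →
      G.Adj s t := by
    intro s t hs ht hst
    by_contra hn
    have huQ : ∀ z, (z = v ∨ G.Adj v z) → u ≠ z := by
      intro z hz h
      exact hdisj z (Or.inl h.symm) hz
    rcases hA s t hst hn u (huQ s hs) (huQ t ht) with h | h
    · exact hcross u s (Or.inl rfl) hs h
    · exact hcross u t (Or.inl rfl) ht h
  -- generic conclusion builder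
  have key : ∀ (p q : V → Prop), (∀ w, p w ∨ q w) → (∀ w, p w → q w → False) →
      (∀ s t, p s → q t → ¬G.Adj s t) →
      (∀ s t, p s → p t → s ≠ t → G.Adj s t) →
      (∀ s t, q s → q t → s ≠ t → G.Adj s t) →
      ∀ (a b : V), p a → p b → a ≠ b → (∀ w, p w → w = a ∨ w = b) →
      ∀ x y, G.Adj x y ↔ x ≠ y ∧
        ((x ∈ ({a, b} : Set V) ∧ y ∈ ({a, b} : Set V)) ∨
         (x ∉ ({a, b} : Set V) ∧ y ∉ ({a, b} : Set V))) := by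
    intro p q htot' hdisj' hcross' hP hQ a b hpa hpb hab hponly x y
    have hmem : ∀ z, z ∈ ({a, b} : Set V) ↔ p z := by
      intro z
      simp only [Set.mem_insert_iff, Set.mem_singleton_iff]
      constructor
      · rintro (rfl | rfl)
        exacts [hpa, hpb]
      · exact hponly z
    have hq : ∀ z, z ∉ ({a, b} : Set V) ↔ q z := by
      intro z
      rw [hmem]
      constructor
      · intro h
        rcases htot' z with h' | h'
        · exact absurd h' h
        · exact h'
      · intro h hp
        exact hdisj' z hp h
    constructor
    · intro hadj
      refine ⟨hadj.ne, ?_⟩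
      rcases htot' x with hx | hx <;> rcases htot' y with hy | hy
      · exact Or.inl ⟨(hmem x).mpr hx, (hmem y).mpr hy⟩
      · exact absurd hadj (hcross' x y hx hy)
      · exact absurd hadj.symm (hcross' y x hy hx)
      · exact Or.inr ⟨(hq x).mpr hx, (hq y).mpr hy⟩
    · rintro ⟨hne', hOr | hOr⟩
      · exact hP x y ((hmem x).mp hOr.1) ((hmem y).mp hOr.2) hne'
      · exact hQ x y ((hq x).mp hOr.1) ((hq y).mp hOr.2) hne'
  -- neighbours of u and v
  obtain ⟨t, htu⟩ := hiso u
  obtain ⟨s, hsv⟩ := hiso v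
  have hPt : t = u ∨ G.Adj u t := Or.inr htu
  have hQs : s = v ∨ G.Adj v s := Or.inr hsv
  -- decide which side is small
  by_cases hbig : ∃ z, (z = u ∨ G.Adj u z) ∧ z ≠ u ∧ z ≠ t
  · -- P side has ≥ 3 elements; show Q side is small
    -- weight argument
    obtain ⟨f, hf, hfw⟩ := trdf_of_ne_zero (G := G) (by rw [h5]; norm_num)
    have hclosedP : ∀ s' t' : V, (s' = u ∨ G.Adj u s') → G.Adj s' t' →
        (t' = u ∨ G.Adj u t') := by
      intro s' t' hs' hadj
      rcases htot t' with h | h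
      · exact h
      · exact absurd hadj (hcross s' t' hs' h)
    have hclosedQ : ∀ s' t' : V, (s' = v ∨ G.Adj v s') → G.Adj s' t' →
        (t' = v ∨ G.Adj v t') := by
      intro s' t' hs' hadj
      rcases htot t' with h | h
      · exact absurd hadj.symm (hcross t' s' h hs')
      · exact h
    have hsum : ∀ (F : Finset V) (a b c : V),
        (∀ s' t', s' ∈ F → G.Adj s' t' → t' ∈ F) → a ∈ F → b ∈ F → c ∈ F →
        a ≠ b → a ≠ c → b ≠ c → 3 ≤ ∑ w ∈ F, f w := by
      intro F a b c hclosed ha hb hc hab hac hbc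
      by_cases hz : ∃ z, z ∈ F ∧ f z = 0
      · obtain ⟨z, hpz, hz0⟩ := hz
        obtain ⟨x, hzx, hx2⟩ := hf.2.1 z hz0
        have hpx : x ∈ F := hclosed z x hpz hzx
        obtain ⟨y, hxy, hy⟩ := hf.2.2 x (by omega)
        have hpy : y ∈ F := hclosed x y hpx hxy
        have hsub : ({x, y} : Finset V) ⊆ F := by
          intro w hw
          simp only [Finset.mem_insert, Finset.mem_singleton] at hw
          rcases hw with rfl | rfl
          exacts [hpx, hpy]
        have hle := Finset.sum_le_sum_of_subset (f := f) hsub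
        rw [Finset.sum_insert (by simp [hxy.ne]), Finset.sum_singleton] at hle
        omega
      · push_neg at hz
        have hsub : ({a, b, c} : Finset V) ⊆ F := by
          intro w hw
          simp only [Finset.mem_insert, Finset.mem_singleton] at hw
          rcases hw with rfl | rfl | rfl
          exacts [ha, hb, hc]
        have hle := Finset.sum_le_sum_of_subset (f := f) hsub
        rw [Finset.sum_insert (by simp [hab, hac]), Finset.sum_insert (by simp [hbc]),
          Finset.sum_singleton] at hle
        have h1 := hz a ha
        have h2 := hz b hb
        have h3 := hz c hc
        omega
    set FP : Finset V := univ.filter (fun w => w = u ∨ G.Adj u w) with hFPdef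
    set FQ : Finset V := univ.filter (fun w => w = v ∨ G.Adj v w) with hFQdef
    have hmemP : ∀ w, w ∈ FP ↔ (w = u ∨ G.Adj u w) := by
      intro w; rw [hFPdef]; simp
    have hmemQ : ∀ w, w ∈ FQ ↔ (w = v ∨ G.Adj v w) := by
      intro w; rw [hFQdef]; simp
    have hsplit : ∑ w ∈ FP, f w + ∑ w ∈ FQ, f w = 5 := by
      have hdisjF : Disjoint FP FQ := by
        rw [Finset.disjoint_left]
        intro w hw1 hw2
        exact absurd (hmemQ w |>.mp hw2) (fun h => hdisj w (hmemP w |>.mp hw1) h)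
      have hunion : FP ∪ FQ = univ := by
        apply Finset.eq_univ_of_forall
        intro w
        rw [Finset.mem_union, hmemP, hmemQ]
        exact htot w
      rw [← Finset.sum_union hdisjF, hunion, hfw, h5]
    have hQsmall : ∀ w, (w = v ∨ G.Adj v w) → w = v ∨ w = s := by
      by_contra hc
      push_neg at hc
      obtain ⟨z2, hz2, hz2v, hz2s⟩ := hc
      obtain ⟨z1, hz1, h1u, h1t⟩ := hbig
      have hclP : ∀ s' t', s' ∈ FP → G.Adj s' t' → t' ∈ FP := by
        intro s' t' hs' hadj
        exact (hmemP t').mpr (hclosedP s' t' ((hmemP s').mp hs') hadj)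
      have hclQ : ∀ s' t', s' ∈ FQ → G.Adj s' t' → t' ∈ FQ := by
        intro s' t' hs' hadj
        exact (hmemQ t').mpr (hclosedQ s' t' ((hmemQ s').mp hs') hadj)
      have s1 := hsum FP u t z1 hclP ((hmemP u).mpr (Or.inl rfl))
        ((hmemP t).mpr hPt) ((hmemP z1).mpr hz1) htu.ne
        (fun h => h1u h.symm) (fun h => h1t h.symm)
      have s2 := hsum FQ v s z2 hclQ ((hmemQ v).mpr (Or.inl rfl))
        ((hmemQ s).mpr hQs) ((hmemQ z2).mpr hz2) hsv.ne
        (fun h => hz2v h.symm) (fun h => hz2s h.symm)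
      omega
    refine ⟨v, s, hsv.ne, ?_⟩
    exact key (fun w => w = v ∨ G.Adj v w) (fun w => w = u ∨ G.Adj u w)
      (fun w => (htot w).symm) (fun w h1 h2 => hdisj w h2 h1)
      (fun s' t' h1 h2 hadj => hcross t' s' h2 h1 hadj.symm)
      hQcomp hPcomp v s (Or.inl rfl) hQs hsv.ne hQsmall
  · push_neg at hbig
    have hPsmall : ∀ w, (w = u ∨ G.Adj u w) → w = u ∨ w = t := by
      intro w hw
      by_cases h : w = u
      · exact Or.inl h
      · exact Or.inr (hbig w hw h)
    refine ⟨u, t, htu.ne, ?_⟩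
    exact key (fun w => w = u ∨ G.Adj u w) (fun w => w = v ∨ G.Adj v w)
      htot hdisj hcross hPcomp hQcomp u t (Or.inl rfl) hPt htu.ne hPsmall

end TRDAux

open Finset in
theorem stmt11 {V : Type*} [Fintype V] (G : SimpleGraph V)
    (hne : ∃ u v, Gᶜ.Adj u v)
    (h5 : trdn G = 5)
    (hcrit : ∀ u v, Gᶜ.Adj u v → trdn (addEdge G u v) < 5) :
    (tdomn G = 3 ∧ ∀ u v, Gᶜ.Adj u v → tdomn (addEdge G u v) < 3) ∨
    ((∃ a b : V, a ≠ b ∧ 5 ≤ Fintype.card V ∧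
        ∀ u v, G.Adj u v ↔ u ≠ v ∧
          ((u ∈ ({a, b} : Set V) ∧ v ∈ ({a, b} : Set V)) ∨
           (u ∉ ({a, b} : Set V) ∧ v ∉ ({a, b} : Set V)))) ∧
      tdomn G = 4 ∧ ∀ u v, Gᶜ.Adj u v → tdomn (addEdge G u v) = 2) := by
  classical
  obtain ⟨f0, hf0, hf0w⟩ := trdf_of_ne_zero (G := G) (by rw [h5]; norm_num)
  have hiso : NoIsolated G := noIso_of_trdf hf0
  have hcard : 5 ≤ Fintype.card V := by
    have := trdn_le_card hiso
    omega
  have hnv : Nonempty V := Fintype.card_pos_iff.mp (by omega)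
  have hpair : ∀ u v : V, u ≠ v → ¬G.Adj u v →
      ∃ x y, (addEdge G u v).Adj x y ∧
        ∀ w, (addEdge G u v).Adj w x ∨ (addEdge G u v).Adj w y := by
    intro u v huv hnadj
    have hiso' : NoIsolated (addEdge G u v) := noIsolated_addEdge hiso
    obtain ⟨g, hg, hgw⟩ := exists_trdf hiso'
    have hlt : trdn (addEdge G u v) < 5 :=
      hcrit u v ((G.compl_adj u v).mpr ⟨huv, hnadj⟩)
    exact pair_lemma hcard hg (by omega)
  have htds2 : ∀ S : Finset V, (∀ w, ∃ s ∈ S, G.Adj w s) → 3 ≤ S.card :=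
    fun S hS => tds_card_three h5 hnv hS
  by_cases h3 : ∃ S : Finset V, (∀ w, ∃ s ∈ S, G.Adj w s) ∧ S.card = 3
  · left
    obtain ⟨S, hS, hS3⟩ := h3
    constructor
    · refine le_antisymm ?_ (le_csInf ⟨3, S, hS, hS3⟩ ?_)
      · exact Nat.sInf_le ⟨S, hS, hS3⟩
      · rintro k ⟨T, hT, rfl⟩
        exact htds2 T hT
    · intro u v huv
      rw [SimpleGraph.compl_adj] at huv
      obtain ⟨x, y, hxy, hdom⟩ := hpair u v huv.1 huv.2
      have hle : tdomn (addEdge G u v) ≤ 2 := by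
        have hcd : ({x, y} : Finset V).card ≤ 2 :=
          (Finset.card_insert_le _ _).trans (by simp)
        have := Nat.sInf_le (s := {k | ∃ S : Finset V,
          (∀ w, ∃ s ∈ S, (addEdge G u v).Adj w s) ∧ S.card = k})
          (m := ({x, y} : Finset V).card)
          ⟨{x, y}, fun w => by
            rcases hdom w with h | h
            exacts [⟨x, by simp, h⟩, ⟨y, by simp, h⟩], rfl⟩
        exact this.trans hcd
      omega
  · right
    have hT4 : ∀ S : Finset V, (∀ w, ∃ s ∈ S, G.Adj w s) → 4 ≤ S.card := by
      intro S hS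
      by_contra h
      push_neg at h
      have := htds2 S hS
      exact h3 ⟨S, hS, by omega⟩
    obtain ⟨u, v, huv⟩ := hne
    rw [SimpleGraph.compl_adj] at huv
    obtain ⟨a, b, hab, hstruct⟩ :=
      structure_lemma hiso h5 hpair hT4 huv.1 huv.2
    have hamem : a ∈ ({a, b} : Set V) := by simp
    have hbmem : b ∈ ({a, b} : Set V) := by simp
    refine ⟨⟨a, b, hab, hcard, hstruct⟩, ?_, ?_⟩
    · -- tdomn G = 4
      have hbig : 1 < (univ \ ({a, b} : Finset V)).card := by
        have h1 : ({a, b} : Finset V).card ≤ 2 :=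
          (Finset.card_insert_le _ _).trans (by simp)
        rw [Finset.card_sdiff_of_subset (Finset.subset_univ _), Finset.card_univ]
        omega
      obtain ⟨c, hc, d, hd, hcd⟩ := Finset.one_lt_card.mp hbig
      simp only [Finset.mem_sdiff, Finset.mem_univ, true_and, Finset.mem_insert,
        Finset.mem_singleton, not_or] at hc hd
      have hcs : c ∉ ({a, b} : Set V) := by
        simp only [Set.mem_insert_iff, Set.mem_singleton_iff, not_or]
        exact hc
      have hds : d ∉ ({a, b} : Set V) := by
        simp only [Set.mem_insert_iff, Set.mem_singleton_iff, not_or]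
        exact hd
      have hS : ∀ w, ∃ s ∈ ({a, b, c, d} : Finset V), G.Adj w s := by
        intro w
        by_cases hwa : w = a
        · exact ⟨b, by simp, (hstruct w b).mpr ⟨hwa ▸ hab, Or.inl ⟨hwa ▸ hamem, hbmem⟩⟩⟩
        by_cases hwb : w = b
        · exact ⟨a, by simp, (hstruct w a).mpr
            ⟨hwb ▸ (Ne.symm hab), Or.inl ⟨hwb ▸ hbmem, hamem⟩⟩⟩
        have hws : w ∉ ({a, b} : Set V) := by
          simp only [Set.mem_insert_iff, Set.mem_singleton_iff, not_or]
          exact ⟨hwa, hwb⟩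
        by_cases hwc : w = c
        · exact ⟨d, by simp, (hstruct w d).mpr ⟨hwc ▸ hcd, Or.inr ⟨hws, hds⟩⟩⟩
        · exact ⟨c, by simp, (hstruct w c).mpr ⟨hwc, Or.inr ⟨hws, hcs⟩⟩⟩
      have hScard : ({a, b, c, d} : Finset V).card = 4 := by
        rw [Finset.card_insert_of_notMem (by
          simp only [Finset.mem_insert, Finset.mem_singleton, not_or]
          exact ⟨hab, Ne.symm hc.1, Ne.symm hd.1⟩),
          Finset.card_insert_of_notMem (by
          simp only [Finset.mem_insert, Finset.mem_singleton, not_or]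
          exact ⟨Ne.symm hc.2, Ne.symm hd.2⟩),
          Finset.card_insert_of_notMem (by simp [hcd]),
          Finset.card_singleton]
      refine le_antisymm ?_ (le_csInf ⟨4, {a, b, c, d}, hS, hScard⟩ ?_)
      · exact Nat.sInf_le ⟨{a, b, c, d}, hS, hScard⟩
      · rintro k ⟨T, hT, rfl⟩
        exact hT4 T hT
    · intro u' v' huv'
      rw [SimpleGraph.compl_adj] at huv'
      obtain ⟨x, y, hxy, hdom⟩ := hpair u' v' huv'.1 huv'.2
      have hStds : ∀ w, ∃ s ∈ ({x, y} : Finset V), (addEdge G u' v').Adj w s := by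
        intro w
        rcases hdom w with h | h
        exacts [⟨x, by simp, h⟩, ⟨y, by simp, h⟩]
      have hc2 : ({x, y} : Finset V).card = 2 := by
        rw [Finset.card_insert_of_notMem (by simp [hxy.ne]), Finset.card_singleton]
      refine le_antisymm ?_ (le_csInf ⟨2, {x, y}, hStds, hc2⟩ ?_)
      · exact Nat.sInf_le ⟨{x, y}, hStds, hc2⟩
      · rintro k ⟨T, hT, rfl⟩
        exact tds_card_two hnv hT
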